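/- arXiv:2203.08170 — 3 statements merged into one kernel-verified Lean document; each statement's English description precedes it below -/
import Mathlib

section
/- For any non-complete finite simple graph G of order n, gp(μ(G)) ≥ max{n, 2·α_gp(G)}, where α_gp(G) is the maximum cardinality of a set of vertices of G that is simultaneously an independent set and a general position set of G. -/
open SimpleGraph

variable {V : Type*}

/-- The Mycielskian of a graph `G`: vertices are `some (Sum.inl v)` (original vertices),
`some (Sum.inr v)` (twin vertices), and `none` (the root `u*`). -/
def Mycielskian (G : SimpleGraph V) : SimpleGraph (Option (V ⊕ V)) :=
  SimpleGraph.fromRel (fun x y =>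
    (∃ u v, G.Adj u v ∧ x = some (Sum.inl u) ∧ y = some (Sum.inl v)) ∨
    (∃ u v, G.Adj u v ∧ x = some (Sum.inl u) ∧ y = some (Sum.inr v)) ∨
    (∃ u, x = some (Sum.inr u) ∧ y = none))

/-- `S` is a general position set: no shortest path between two vertices of `S`
contains a third element of `S`. -/
def IsGPSet (G : SimpleGraph V) (S : Set V) : Prop :=
  ∀ u ∈ S, ∀ v ∈ S, ∀ p : G.Walk u v, p.length = G.dist u v →
    ∀ w ∈ S, w ∈ p.support → w = u ∨ w = v

/-- The general position number of `G`: the maximum cardinality of a general position set. -/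
noncomputable def gpNumber (G : SimpleGraph V) [Fintype V] : ℕ :=
  sSup {k | ∃ S : Set V, IsGPSet G S ∧ S.ncard = k}

/-- A gp-set: a general position set of maximum cardinality. -/
def IsGpSet (G : SimpleGraph V) [Fintype V] (S : Set V) : Prop :=
  IsGPSet G S ∧ S.ncard = gpNumber G

/-- The maximum cardinality of a set of vertices of `G` that is simultaneously an
independent set and a general position set of `G`. -/
noncomputable def alphaGpNumber (G : SimpleGraph V) [Fintype V] : ℕ :=
  sSup {k | ∃ S : Set V, (∀ u ∈ S, ∀ v ∈ S, ¬ G.Adj u v) ∧ IsGPSet G S ∧ S.ncard = k}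

section Helpers

open Sum Walk

variable {G : SimpleGraph V}

lemma myc_adj_cases {x y : Option (V ⊕ V)} (h : (Mycielskian G).Adj x y) :
    (∃ u v, G.Adj u v ∧ ((x = some (inl u) ∧ y = some (inl v)) ∨
      (x = some (inl u) ∧ y = some (inr v)) ∨ (x = some (inr v) ∧ y = some (inl u)))) ∨
    (∃ u, (x = some (inr u) ∧ y = none) ∨ (x = none ∧ y = some (inr u))) := by
  rw [Mycielskian, fromRel_adj] at h
  obtain ⟨-, h | h⟩ := h
  · rcases h with ⟨u, v, h, rfl, rfl⟩ | ⟨u, v, h, rfl, rfl⟩ | ⟨u, rfl, rfl⟩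
    · exact Or.inl ⟨u, v, h, Or.inl ⟨rfl, rfl⟩⟩
    · exact Or.inl ⟨u, v, h, Or.inr (Or.inl ⟨rfl, rfl⟩)⟩
    · exact Or.inr ⟨u, Or.inl ⟨rfl, rfl⟩⟩
  · rcases h with ⟨u, v, h, rfl, rfl⟩ | ⟨u, v, h, rfl, rfl⟩ | ⟨u, rfl, rfl⟩
    · exact Or.inl ⟨v, u, h.symm, Or.inl ⟨rfl, rfl⟩⟩
    · exact Or.inl ⟨u, v, h, Or.inr (Or.inr ⟨rfl, rfl⟩)⟩
    · exact Or.inr ⟨u, Or.inr ⟨rfl, rfl⟩⟩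

lemma adj_inl_inl {u v : V} (h : G.Adj u v) :
    (Mycielskian G).Adj (some (inl u)) (some (inl v)) := by
  rw [Mycielskian, fromRel_adj]
  exact ⟨by simp [h.ne], Or.inl (Or.inl ⟨u, v, h, rfl, rfl⟩)⟩

lemma adj_inl_inr {u v : V} (h : G.Adj u v) :
    (Mycielskian G).Adj (some (inl u)) (some (inr v)) := by
  rw [Mycielskian, fromRel_adj]
  exact ⟨by simp, Or.inl (Or.inr (Or.inl ⟨u, v, h, rfl, rfl⟩))⟩

lemma adj_inr_none (G : SimpleGraph V) (u : V) :
    (Mycielskian G).Adj (some (inr u)) none := by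
  rw [Mycielskian, fromRel_adj]
  exact ⟨by simp, Or.inl (Or.inr (Or.inr ⟨u, rfl, rfl⟩))⟩

lemma not_adj_mix {s t : V} (hst : ¬ G.Adj s t) {x y : Option (V ⊕ V)}
    (hx : x = some (inl s) ∨ x = some (inr s)) (hy : y = some (inl t) ∨ y = some (inr t)) :
    ¬ (Mycielskian G).Adj x y := by
  intro h
  have hst' : ¬ G.Adj t s := fun h' => hst h'.symm
  rcases myc_adj_cases h with ⟨u, v, huv, ⟨h1, h2⟩ | ⟨h1, h2⟩ | ⟨h1, h2⟩⟩ | ⟨u, ⟨h1, h2⟩ | ⟨h1, h2⟩⟩ <;>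
    rcases hx with rfl | rfl <;> rcases hy with h3 | h3 <;> simp_all

lemma not_adj_inl_none {u : V} : ¬ (Mycielskian G).Adj (some (inl u)) none := by
  intro h
  rcases myc_adj_cases h with ⟨a, b, hab, ⟨h1, h2⟩ | ⟨h1, h2⟩ | ⟨h1, h2⟩⟩ | ⟨a, ⟨h1, h2⟩ | ⟨h1, h2⟩⟩ <;>
    simp_all

lemma neighbor_inl {u : V} {y : Option (V ⊕ V)} (h : (Mycielskian G).Adj (some (inl u)) y) :
    ∃ s, G.Adj u s ∧ (y = some (inl s) ∨ y = some (inr s)) := by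
  rcases myc_adj_cases h with ⟨a, b, hab, ⟨h1, h2⟩ | ⟨h1, h2⟩ | ⟨h1, h2⟩⟩ | ⟨a, ⟨h1, h2⟩ | ⟨h1, h2⟩⟩
  · simp only [Option.some.injEq, Sum.inl.injEq] at h1
    subst h1 h2
    exact ⟨b, hab, Or.inl rfl⟩
  · simp only [Option.some.injEq, Sum.inl.injEq] at h1
    subst h1 h2
    exact ⟨b, hab, Or.inr rfl⟩
  · simp at h1
  · simp at h1
  · simp at h1

end Helpers
section Helpers2

open Sum Walk

variable {G : SimpleGraph V}

lemma one_le_length {W : Type*} {H : SimpleGraph W} {a b : W} (p : H.Walk a b) (h : a ≠ b) :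
    1 ≤ p.length := by
  cases p with
  | nil => exact absurd rfl h
  | cons _ q => simp [Walk.length_cons]

lemma two_le_length {W : Type*} {H : SimpleGraph W} {a b : W} (p : H.Walk a b)
    (hne : a ≠ b) (hadj : ¬ H.Adj a b) : 2 ≤ p.length := by
  cases p with
  | nil => exact absurd rfl hne
  | cons h q =>
    cases q with
    | nil => exact absurd h hadj
    | cons h' q' => simp [Walk.length_cons]

lemma length_take_add {W : Type*} [DecidableEq W] {H : SimpleGraph W} {a b w : W} (p : H.Walk a b)
    (hw : w ∈ p.support) :
    (p.takeUntil w hw).length + (p.dropUntil w hw).length = p.length := by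
  have := congrArg Walk.length (p.take_spec hw)
  rwa [Walk.length_append] at this

lemma three_le_length {W : Type*} [DecidableEq W] {H : SimpleGraph W} {a b w : W} (p : H.Walk a b)
    (hw : w ∈ p.support) (h1 : a ≠ w) (h2 : ¬ H.Adj a w) (h3 : w ≠ b) : 3 ≤ p.length := by
  have hadd := length_take_add p hw
  have t1 := two_le_length (p.takeUntil w hw) h1 h2
  have t2 := one_le_length (p.dropUntil w hw) h3
  omega

lemma four_le_length {W : Type*} [DecidableEq W] {H : SimpleGraph W} {a b w : W} (p : H.Walk a b)
    (hw : w ∈ p.support) (h1 : a ≠ w) (h2 : w ≠ b)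
    (h3 : ¬ H.Adj a w) (h4 : ¬ H.Adj w b) : 4 ≤ p.length := by
  have hadd := length_take_add p hw
  have t1 := two_le_length (p.takeUntil w hw) h1 h3
  have t2 := two_le_length (p.dropUntil w hw) h2 h4
  omega

lemma mem_take_or_drop {W : Type*} [DecidableEq W] {H : SimpleGraph W} {a b w : W} (p : H.Walk a b)
    (hw : w ∈ p.support) (x : W) (hx : x ∈ p.support) :
    x ∈ (p.takeUntil w hw).support ∨ x ∈ (p.dropUntil w hw).support := by
  rw [← p.take_spec hw, Walk.mem_support_append_iff] at hx
  exact hx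

/-- Projection to `V` (junk value at the root). -/
noncomputable def pj [Nonempty V] : Option (V ⊕ V) → V :=
  fun o => o.elim (Classical.arbitrary V) (Sum.elim id id)

lemma adj_pj [Nonempty V] {x y : V ⊕ V} (h : (Mycielskian G).Adj (some x) (some y)) :
    G.Adj (pj (some x)) (pj (some y)) := by
  rcases myc_adj_cases h with ⟨u, v, huv, ⟨h1, h2⟩ | ⟨h1, h2⟩ | ⟨h1, h2⟩⟩ | ⟨u, ⟨h1, h2⟩ | ⟨h1, h2⟩⟩
  · simp only [Option.some.injEq] at h1 h2
    subst h1 h2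
    simpa [pj] using huv
  · simp only [Option.some.injEq] at h1 h2
    subst h1 h2
    simpa [pj] using huv
  · simp only [Option.some.injEq] at h1 h2
    subst h1 h2
    simpa [pj] using huv.symm
  · simp at h2
  · simp at h1

lemma proj_walk [Nonempty V] {a b : Option (V ⊕ V)} (p : (Mycielskian G).Walk a b)
    (h : none ∉ p.support) :
    ∃ q : G.Walk (pj a) (pj b), q.length = p.length ∧
      ∀ x ∈ p.support, pj x ∈ q.support := by
  induction p with
  | nil => exact ⟨Walk.nil, rfl, by simp⟩
  | @cons a c b hadj p ih =>
    simp only [Walk.support_cons, List.mem_cons] at h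
    push_neg at h
    obtain ⟨hna, hnp⟩ := h
    obtain ⟨q, hl, hs⟩ := ih hnp
    obtain ⟨a', rfl⟩ : ∃ a', a = some a' := Option.ne_none_iff_exists'.mp (Ne.symm hna)
    obtain ⟨c', rfl⟩ : ∃ c', c = some c' :=
      Option.ne_none_iff_exists'.mp (fun hc => hnp (hc ▸ Walk.start_mem_support p))
    refine ⟨Walk.cons (adj_pj hadj) q, by simp [hl], ?_⟩
    intro x hx
    simp only [Walk.support_cons, List.mem_cons] at hx ⊢
    rcases hx with rfl | hx
    · exact Or.inl rfl
    · exact Or.inr (hs x hx)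

/-- The natural embedding of `G` into its Mycielskian. -/
def liftHom (G : SimpleGraph V) : G →g Mycielskian G where
  toFun := fun v => some (inl v)
  map_rel' := fun h => adj_inl_inl h

lemma dist_inl_le {u v : V} (h : G.Reachable u v) :
    (Mycielskian G).dist (some (inl u)) (some (inl v)) ≤ G.dist u v := by
  obtain ⟨q, hq⟩ := h.exists_walk_length_eq_dist
  calc (Mycielskian G).dist (some (inl u)) (some (inl v)) ≤ (q.map (liftHom G)).length :=
        dist_le _
    _ = G.dist u v := by rw [Walk.length_map, hq]

end Helpers2
section GPCases

open Sum Walk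

variable {G : SimpleGraph V}

lemma not_adj_inr_inr {u v : V} : ¬ (Mycielskian G).Adj (some (inr u)) (some (inr v)) := by
  intro h
  rcases myc_adj_cases h with ⟨a, b, hab, ⟨h1, h2⟩ | ⟨h1, h2⟩ | ⟨h1, h2⟩⟩ | ⟨a, ⟨h1, h2⟩ | ⟨h1, h2⟩⟩ <;>
    simp_all

lemma gp_twins (G : SimpleGraph V) :
    IsGPSet (Mycielskian G) (Set.range (fun v : V => (some (Sum.inr v) : Option (V ⊕ V)))) := by
  classical
  rintro a ⟨u, rfl⟩ b ⟨v, rfl⟩ p hp w hw hws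
  obtain ⟨t, rfl⟩ := hw
  by_contra hcon
  push_neg at hcon
  obtain ⟨hwa, hwb⟩ := hcon
  simp only at hwa hwb hws hp ⊢
  by_cases huv : u = v
  · subst huv
    rw [dist_self] at hp
    have hsupp : p.support = [some (inr u)] := by
      cases p with
      | nil => simp
      | cons h q => simp [Walk.length_cons] at hp
    rw [hsupp] at hws
    simp at hws
    exact hwa (by rw [hws])
  · have hd : (Mycielskian G).dist (some (inr u)) (some (inr v)) ≤ 2 := by
      have h := dist_le (Walk.cons (adj_inr_none G u) (Walk.cons (adj_inr_none G v).symm Walk.nil))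
      simpa using h
    have h4 : 4 ≤ p.length :=
      four_le_length p hws (fun h => hwa h.symm) hwb not_adj_inr_inr not_adj_inr_inr
    omega

end GPCases
section GPCases2

open Sum Walk

variable {G : SimpleGraph V}

lemma case_lr {S : Set V} (hind : ∀ u ∈ S, ∀ v ∈ S, ¬ G.Adj u v)
    {u v : V} (hu : u ∈ S) (hv : v ∈ S)
    (p : (Mycielskian G).Walk (some (inl u)) (some (inr v)))
    (hp : p.length = (Mycielskian G).dist (some (inl u)) (some (inr v)))
    {t : V} (ht : t ∈ S) {w : Option (V ⊕ V)}
    (hwt : w = some (inl t) ∨ w = some (inr t))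
    (hws : w ∈ p.support) : w = some (inl u) ∨ w = some (inr v) := by
  classical
  by_contra hcon
  push_neg at hcon
  obtain ⟨hwa, hwb⟩ := hcon
  have hne : (some (inl u) : Option (V ⊕ V)) ≠ some (inr v) := by simp
  have hnil : ¬ p.Nil := Walk.not_nil_of_ne hne
  obtain ⟨s, hs, -⟩ := neighbor_inl (p.adj_snd hnil)
  have h4 : 4 ≤ p.length :=
    four_le_length p hws (fun h => hwa h.symm) hwb
      (not_adj_mix (hind u hu t ht) (Or.inl rfl) hwt)
      (not_adj_mix (hind t ht v hv) hwt (Or.inr rfl))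
  have hd : (Mycielskian G).dist (some (inl u)) (some (inr v)) ≤ 3 := by
    have h := dist_le (Walk.cons (adj_inl_inr hs)
      (Walk.cons (adj_inr_none G s) (Walk.cons (adj_inr_none G v).symm Walk.nil)))
    simpa using h
  omega

lemma case_rr {S : Set V} (hind : ∀ u ∈ S, ∀ v ∈ S, ¬ G.Adj u v)
    {u v : V} (hu : u ∈ S) (hv : v ∈ S)
    (p : (Mycielskian G).Walk (some (inr u)) (some (inr v)))
    (hp : p.length = (Mycielskian G).dist (some (inr u)) (some (inr v)))
    {t : V} (ht : t ∈ S) {w : Option (V ⊕ V)}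
    (hwt : w = some (inl t) ∨ w = some (inr t))
    (hws : w ∈ p.support) : w = some (inr u) ∨ w = some (inr v) := by
  classical
  by_contra hcon
  push_neg at hcon
  obtain ⟨hwa, hwb⟩ := hcon
  by_cases huv : u = v
  · subst huv
    rw [dist_self] at hp
    have hsupp : p.support = [some (inr u)] := by
      cases p with
      | nil => simp
      | cons h q => simp [Walk.length_cons] at hp
    rw [hsupp] at hws
    simp at hws
    exact hwa (by rw [hws])
  · have hd : (Mycielskian G).dist (some (inr u)) (some (inr v)) ≤ 2 := by
      have h := dist_le (Walk.cons (adj_inr_none G u) (Walk.cons (adj_inr_none G v).symm Walk.nil))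
      simpa using h
    have h4 : 4 ≤ p.length :=
      four_le_length p hws (fun h => hwa h.symm) hwb
        (not_adj_mix (hind u hu t ht) (Or.inr rfl) hwt)
        (not_adj_mix (hind t ht v hv) hwt (Or.inr rfl))
    omega

lemma case_ll {S : Set V} (hind : ∀ u ∈ S, ∀ v ∈ S, ¬ G.Adj u v) (hS : IsGPSet G S)
    {u v : V} (hu : u ∈ S) (hv : v ∈ S)
    (p : (Mycielskian G).Walk (some (inl u)) (some (inl v)))
    (hp : p.length = (Mycielskian G).dist (some (inl u)) (some (inl v)))
    {t : V} (ht : t ∈ S) {w : Option (V ⊕ V)}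
    (hwt : w = some (inl t) ∨ w = some (inr t))
    (hws : w ∈ p.support) : w = some (inl u) ∨ w = some (inl v) := by
  classical
  by_contra hcon
  push_neg at hcon
  obtain ⟨hwa, hwb⟩ := hcon
  by_cases huv : u = v
  · subst huv
    rw [dist_self] at hp
    have hsupp : p.support = [some (inl u)] := by
      cases p with
      | nil => simp
      | cons h q => simp [Walk.length_cons] at hp
    rw [hsupp] at hws
    simp at hws
    exact hwa (by rw [hws])
  · have hne : (some (inl u) : Option (V ⊕ V)) ≠ some (inl v) := by simp [huv]
    have hnil : ¬ p.Nil := Walk.not_nil_of_ne hne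
    obtain ⟨s, hs, -⟩ := neighbor_inl (p.adj_snd hnil)
    have hnil' : ¬ p.reverse.Nil := Walk.not_nil_of_ne (Ne.symm hne)
    obtain ⟨s', hs', -⟩ := neighbor_inl (p.reverse.adj_snd hnil')
    have hnadj_aw : ¬ (Mycielskian G).Adj (some (inl u)) w :=
      not_adj_mix (hind u hu t ht) (Or.inl rfl) hwt
    have hnadj_wb : ¬ (Mycielskian G).Adj w (some (inl v)) :=
      not_adj_mix (hind t ht v hv) hwt (Or.inl rfl)
    have h4 : 4 ≤ p.length :=
      four_le_length p hws (fun h => hwa h.symm) hwb hnadj_aw hnadj_wb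
    have hd4 : (Mycielskian G).dist (some (inl u)) (some (inl v)) ≤ 4 := by
      have h := dist_le (Walk.cons (adj_inl_inr hs)
        (Walk.cons (adj_inr_none G s)
          (Walk.cons (adj_inr_none G s').symm
            (Walk.cons (adj_inl_inr hs').symm Walk.nil))))
      simpa using h
    have hL : p.length = 4 := by omega
    rcases Classical.em ((none : Option (V ⊕ V)) ∈ p.support) with hnone | hnone
    · have hadd := length_take_add p hnone
      have t1 : 2 ≤ (p.takeUntil none hnone).length :=
        two_le_length _ (by simp) not_adj_inl_none
      have t2 : 2 ≤ (p.dropUntil none hnone).length := by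
        have h := two_le_length (p.dropUntil none hnone).reverse (by simp)
          not_adj_inl_none
        rwa [Walk.length_reverse] at h
      rcases mem_take_or_drop p hnone w hws with hwm | hwm
      · have h3 := three_le_length (p.takeUntil none hnone) hwm (fun h => hwa h.symm)
          hnadj_aw (by rcases hwt with rfl | rfl <;> simp)
        omega
      · have hwm' : w ∈ (p.dropUntil none hnone).reverse.support := by
          rw [Walk.support_reverse, List.mem_reverse]; exact hwm
        have h3 := three_le_length ((p.dropUntil none hnone).reverse) hwm'
          (fun h => hwb h.symm) (fun h => hnadj_wb h.symm)
          (by rcases hwt with rfl | rfl <;> simp)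
        rw [Walk.length_reverse] at h3
        omega
    · haveI : Nonempty V := ⟨u⟩
      obtain ⟨q, hql, hqs⟩ := proj_walk p hnone
      have hq : G.Walk u v := q
      have hreach : G.Reachable u v := ⟨q⟩
      have hle := dist_inl_le hreach
      have hge : G.dist u v ≤ q.length := dist_le q
      have hqdist : q.length = G.dist u v := by omega
      rcases hwt with rfl | rfl
      · have htq : t ∈ q.support := hqs _ hws
        rcases hS u hu v hv q hqdist t ht htq with h' | h'
        · exact hwa (by rw [h'])
        · exact hwb (by rw [h'])
      · have htq : t ∈ q.support := hqs _ hws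
        rcases hS u hu v hv q hqdist t ht htq with h' | h'
        · -- t = u : project the dropUntil part
          have l1 : 2 ≤ (p.takeUntil _ hws).length :=
            two_le_length _ (by simp) hnadj_aw
          have hadd := length_take_add p hws
          have hnd : (none : Option (V ⊕ V)) ∉ (p.dropUntil _ hws).support :=
            fun h => hnone (Walk.support_dropUntil_subset p hws h)
          obtain ⟨q2, hq2l, -⟩ := proj_walk (p.dropUntil _ hws) hnd
          have hq2 : G.dist t v ≤ q2.length := dist_le q2
          subst h'
          omega
        · -- t = v : project the takeUntil part
          have l2 : 2 ≤ (p.dropUntil _ hws).length :=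
            two_le_length _ (by simp) hnadj_wb
          have hadd := length_take_add p hws
          have hnt : (none : Option (V ⊕ V)) ∉ (p.takeUntil _ hws).support :=
            fun h => hnone (Walk.support_takeUntil_subset p hws h)
          obtain ⟨q1, hq1l, -⟩ := proj_walk (p.takeUntil _ hws) hnt
          have hq1 : G.dist u t ≤ q1.length := dist_le q1
          subst h'
          omega

end GPCases2
section Main

open Sum Walk

variable {G : SimpleGraph V}

lemma gp_indep (G : SimpleGraph V) {S : Set V}
    (hind : ∀ u ∈ S, ∀ v ∈ S, ¬ G.Adj u v) (hS : IsGPSet G S) :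
    IsGPSet (Mycielskian G)
      ((fun v => (some (Sum.inl v) : Option (V ⊕ V))) '' S ∪
        (fun v => (some (Sum.inr v) : Option (V ⊕ V))) '' S) := by
  rintro a ha b hb p hp w hw hws
  obtain ⟨t, ht, hwt⟩ : ∃ t ∈ S, w = some (inl t) ∨ w = some (inr t) := by
    rcases hw with ⟨t, ht, rfl⟩ | ⟨t, ht, rfl⟩
    · exact ⟨t, ht, Or.inl rfl⟩
    · exact ⟨t, ht, Or.inr rfl⟩
  rcases ha with ⟨u, hu, rfl⟩ | ⟨u, hu, rfl⟩ <;> rcases hb with ⟨v, hv, rfl⟩ | ⟨v, hv, rfl⟩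
  · exact case_ll hind hS hu hv p hp ht hwt hws
  · exact case_lr hind hu hv p hp ht hwt hws
  · have hp' : p.reverse.length = (Mycielskian G).dist (some (inl v)) (some (inr u)) := by
      rw [Walk.length_reverse, hp, dist_comm]
    have hws' : w ∈ p.reverse.support := by
      rw [Walk.support_reverse, List.mem_reverse]; exact hws
    rcases case_lr hind hv hu p.reverse hp' ht hwt hws' with h | h
    · exact Or.inr h
    · exact Or.inl h
  · exact case_rr hind hu hv p hp ht hwt hws

end Main

/-- For any non-complete graph `G` of order `n`,
`gp(μ(G)) ≥ max {n, 2 α_gp(G)}`. -/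
theorem gpNumber_mycielskian_lower_bound [Fintype V] (G : SimpleGraph V)
    (hne : G ≠ ⊤) :
    max (Fintype.card V) (2 * alphaGpNumber G) ≤ gpNumber (Mycielskian G) := by
  classical
  have hbdd : BddAbove {k | ∃ S : Set (Option (V ⊕ V)),
      IsGPSet (Mycielskian G) S ∧ S.ncard = k} := by
    refine ⟨Fintype.card (Option (V ⊕ V)), ?_⟩
    rintro k ⟨S, -, rfl⟩
    have h := Set.ncard_le_ncard (Set.subset_univ S) Set.finite_univ
    simpa [Set.ncard_univ, Nat.card_eq_fintype_card] using h
  have key : ∀ S : Set (Option (V ⊕ V)), IsGPSet (Mycielskian G) S →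
      S.ncard ≤ gpNumber (Mycielskian G) :=
    fun S h => le_csSup hbdd ⟨S, h, rfl⟩
  refine max_le ?_ ?_
  · have h1 := key _ (gp_twins G)
    have hinj : Function.Injective (fun v : V => (some (Sum.inr v) : Option (V ⊕ V))) := by
      intro a b h; simpa using h
    have hcard : (Set.range fun v : V => (some (Sum.inr v) : Option (V ⊕ V))).ncard
        = Fintype.card V := by
      rw [← Set.image_univ, Set.ncard_image_of_injective _ hinj, Set.ncard_univ,
        Nat.card_eq_fintype_card]
    omega
  · set N := {k | ∃ S : Set V, (∀ u ∈ S, ∀ v ∈ S, ¬ G.Adj u v) ∧ IsGPSet G S ∧ S.ncard = k}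
      with hN
    have hne0 : N.Nonempty := by
      refine ⟨0, ∅, ?_, ?_, by simp⟩
      · intro u hu; exact absurd hu (Set.notMem_empty u)
      · intro u hu; exact absurd hu (Set.notMem_empty u)
    have hbdd2 : BddAbove N := by
      refine ⟨Fintype.card V, ?_⟩
      rintro k ⟨S, -, -, rfl⟩
      have h := Set.ncard_le_ncard (Set.subset_univ S) Set.finite_univ
      simpa [Set.ncard_univ, Nat.card_eq_fintype_card] using h
    obtain ⟨S, hind, hgp, hcard⟩ := Nat.sSup_mem hne0 hbdd2
    have h2 := key _ (gp_indep G hind hgp)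
    have hinj1 : Function.Injective (fun v : V => (some (Sum.inl v) : Option (V ⊕ V))) := by
      intro a b h; simpa using h
    have hinj2 : Function.Injective (fun v : V => (some (Sum.inr v) : Option (V ⊕ V))) := by
      intro a b h; simpa using h
    have hdisj : Disjoint ((fun v : V => (some (Sum.inl v) : Option (V ⊕ V))) '' S)
        ((fun v : V => (some (Sum.inr v) : Option (V ⊕ V))) '' S) := by
      rw [Set.disjoint_left]
      rintro x ⟨a, -, rfl⟩ ⟨b, -, h⟩
      simp at h
    have hA : ((fun v : V => (some (Sum.inl v) : Option (V ⊕ V))) '' S ∪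
        (fun v : V => (some (Sum.inr v) : Option (V ⊕ V))) '' S).ncard = 2 * S.ncard := by
      rw [Set.ncard_union_eq hdisj (Set.toFinite _) (Set.toFinite _),
        Set.ncard_image_of_injective _ hinj1, Set.ncard_image_of_injective _ hinj2]
      omega
    have : alphaGpNumber G = S.ncard := hcard.symm
    omega
end

section
/- For every integer n ≥ 4, the Mycielskian of K_n^-, the complete graph on n vertices with one edge deleted, satisfies gp(μ(K_n^-)) = n. -/
open SimpleGraph

variable {V : Type*}

/-! The twins are pairwise non-adjacent and pairwise joined through the root, so they form a
general position set of size `n`.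

For the upper bound, two vertices of a general position set with a common neighbour in the set
must be adjacent. Let `A` and `B` be the original vertices and the twins in a general position
set of `μ(K_n⁻)`, with `ab` the missing edge, so that every vertex has at most one non-neighbour
besides itself. If `a, b ∈ A`, every other vertex would be a common neighbour of the two, so
`A ∪ B ⊆ {a, b}`, and the root excludes a second twin. Otherwise `|A| < n`, and the count can
only exceed `n` with the root and a twin `w`, or with two twins. In the first case `B = {w}` and
`A` lies among the non-neighbours of `w`; in the second, if `A` contains some `w`, at most one
twin is adjacent to `w`, so `|B| ≤ 3`, and `|A| ≤ 1`. Either way at most `4 ≤ n` vertices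
remain. -/

section Mycielskian

variable {G : SimpleGraph V} {u v : V}

@[simp] lemma mycielskian_adj_inl_inl :
    (Mycielskian G).Adj (some (.inl u)) (some (.inl v)) ↔ G.Adj u v := by
  simpa [Mycielskian, G.adj_comm v u] using G.ne_of_adj

@[simp] lemma mycielskian_adj_inl_inr :
    (Mycielskian G).Adj (some (.inl u)) (some (.inr v)) ↔ G.Adj u v := by
  simp [Mycielskian]

@[simp] lemma mycielskian_adj_inr_inl :
    (Mycielskian G).Adj (some (.inr u)) (some (.inl v)) ↔ G.Adj u v := by
  simp [Mycielskian, G.adj_comm]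

@[simp] lemma mycielskian_not_adj_inr_inr :
    ¬ (Mycielskian G).Adj (some (.inr u)) (some (.inr v)) := by
  simp [Mycielskian]

@[simp] lemma mycielskian_adj_inr_none : (Mycielskian G).Adj (some (.inr u)) none := by
  simp [Mycielskian]

@[simp] lemma mycielskian_adj_none_inr : (Mycielskian G).Adj none (some (.inr u)) := by
  simp [Mycielskian]

@[simp] lemma mycielskian_not_adj_inl_none : ¬ (Mycielskian G).Adj (some (.inl u)) none := by
  simp [Mycielskian]

end Mycielskian

section GeneralPosition

variable {G : SimpleGraph V} {S : Set V}

lemma IsGPSet.adj_of_adj_of_adj (hS : IsGPSet G S) {x y z : V} (hx : x ∈ S) (hy : y ∈ S)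
    (hz : z ∈ S) (hxy : x ≠ y) (hxz : G.Adj x z) (hzy : G.Adj z y) : G.Adj x y := by
  by_contra hnxy
  let p : G.Walk x y := .cons hxz (.cons hzy .nil)
  have hdist : G.dist x y = 2 := by
    have h0 := p.reachable.pos_dist_of_ne hxy
    have h1 : G.dist x y ≠ 1 := fun h => hnxy (dist_eq_one_iff_adj.mp h)
    have h2 : G.dist x y ≤ 2 := dist_le p
    omega
  rcases hS x hx y hy p hdist.symm z hz (by simp [p]) with rfl | rfl
  · exact hxz.ne rfl
  · exact hzy.ne rfl

lemma SimpleGraph.IsIndepSet.isGPSet_of_dist_le_two (hind : G.IsIndepSet S)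
    (hdist : S.Pairwise fun x y => G.dist x y ≤ 2) : IsGPSet G S := by
  intro u hu v hv p hp w hw hwp
  match p with
  | .nil => simpa using hwp
  | .cons _ .nil => simpa using hwp
  | .cons h (.cons _ .nil) =>
    simp only [Walk.support_cons, Walk.support_nil, List.mem_cons, List.not_mem_nil,
      or_false] at hwp
    rcases hwp with rfl | rfl | rfl
    · exact .inl rfl
    · exact absurd h (hind hu hw h.ne)
    · exact .inr rfl
  | .cons _ (.cons _ (.cons _ q)) =>
    have : G.dist u v ≤ 2 := by
      by_cases huv : u = v
      · simp [huv]
      · exact hdist hu hv huv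
    simp only [Walk.length_cons] at hp
    omega

lemma gpNumber_eq_ncard_of_forall_ncard_le [Fintype V] (hS : IsGPSet G S)
    (hle : ∀ T, IsGPSet G T → T.ncard ≤ S.ncard) : gpNumber G = S.ncard :=
  IsGreatest.csSup_eq ⟨⟨S, hS, rfl⟩, by rintro _ ⟨T, hT, rfl⟩; exact hle T hT⟩

end GeneralPosition

def originalsIn (S : Set (Option (V ⊕ V))) : Set V := {u | some (.inl u) ∈ S}

def twinsIn (S : Set (Option (V ⊕ V))) : Set V := {u | some (.inr u) ∈ S}

lemma Set.ncard_eq_sum_ite {α : Type*} [Fintype α] (T : Set α) [DecidablePred (· ∈ T)] :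
    T.ncard = ∑ x, if x ∈ T then 1 else 0 := by
  rw [← Finset.card_filter, ← Set.ncard_coe_finset]
  congr
  ext
  simp

open Classical in
lemma ncard_eq_originalsIn_add_twinsIn [Fintype V] (S : Set (Option (V ⊕ V))) :
    S.ncard = (originalsIn S).ncard + (twinsIn S).ncard + if none ∈ S then 1 else 0 := by
  rw [Set.ncard_eq_sum_ite S, Set.ncard_eq_sum_ite (originalsIn S),
    Set.ncard_eq_sum_ite (twinsIn S), Fintype.sum_option, Fintype.sum_sum_type, add_comm]
  rfl

section MycielskianGP

variable {G : SimpleGraph V} {S : Set (Option (V ⊕ V))}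

lemma isGPSet_range_twin (G : SimpleGraph V) :
    IsGPSet (Mycielskian G) (Set.range fun v => some (.inr v)) := by
  refine IsIndepSet.isGPSet_of_dist_le_two ?_ ?_ <;> rintro _ ⟨u, rfl⟩ _ ⟨v, rfl⟩ -
  · exact mycielskian_not_adj_inr_inr
  · simpa using dist_le (.cons mycielskian_adj_inr_none (.cons mycielskian_adj_none_inr .nil))

lemma twinsIn_subsingleton_of_none_mem (hS : IsGPSet (Mycielskian G) S) (hroot : none ∈ S) :
    (twinsIn S).Subsingleton := by
  intro u hu v hv
  by_contra huv
  exact mycielskian_not_adj_inr_inr <| hS.adj_of_adj_of_adj hu hv hroot (by simpa using huv)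
    mycielskian_adj_inr_none mycielskian_adj_none_inr

lemma twinsIn_inter_neighborSet_subsingleton (hS : IsGPSet (Mycielskian G) S) {w : V}
    (hw : w ∈ originalsIn S) : (twinsIn S ∩ G.neighborSet w).Subsingleton := by
  rintro u ⟨hu, hwu⟩ v ⟨hv, hwv⟩
  by_contra huv
  exact mycielskian_not_adj_inr_inr <| hS.adj_of_adj_of_adj hu hv hw (by simpa using huv)
    (mycielskian_adj_inr_inl.mpr hwu.symm) (mycielskian_adj_inl_inr.mpr hwv)

lemma not_adj_of_mem_originalsIn_of_mem_twinsIn (hS : IsGPSet (Mycielskian G) S) {u w : V}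
    (hu : u ∈ originalsIn S) (hu' : u ∈ twinsIn S) (hw : w ∈ originalsIn S) :
    ¬ G.Adj u w := by
  intro huw
  have := hS.adj_of_adj_of_adj hu hu' hw (by simp) (mycielskian_adj_inl_inl.mpr huw)
    (mycielskian_adj_inl_inr.mpr huw.symm)
  exact G.irrefl (mycielskian_adj_inl_inr.mp this)

lemma originalsIn_subset_of_none_mem (hS : IsGPSet (Mycielskian G) S) (hroot : none ∈ S)
    {w : V} (hw : w ∈ twinsIn S) : originalsIn S ⊆ {u | ¬ G.Adj w u} := fun u hu huw =>
  mycielskian_not_adj_inl_none <| hS.adj_of_adj_of_adj hu hroot hw (by simp)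
    (mycielskian_adj_inl_inr.mpr huw.symm) mycielskian_adj_inr_none

lemma adj_of_mem_originalsIn_of_adj_of_adj (hS : IsGPSet (Mycielskian G) S) {x y c : V}
    (hx : x ∈ originalsIn S) (hy : y ∈ originalsIn S) (hc : c ∈ originalsIn S ∪ twinsIn S)
    (hxy : x ≠ y) (hxc : G.Adj x c) (hcy : G.Adj c y) : G.Adj x y := by
  have hxy' : (some (.inl x) : Option (V ⊕ V)) ≠ some (.inl y) := by simpa using hxy
  rcases hc with hc | hc
  · exact mycielskian_adj_inl_inl.mp <| hS.adj_of_adj_of_adj hx hy hc hxy'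
      (mycielskian_adj_inl_inl.mpr hxc) (mycielskian_adj_inl_inl.mpr hcy)
  · exact mycielskian_adj_inl_inl.mp <| hS.adj_of_adj_of_adj hx hy hc hxy'
      (mycielskian_adj_inl_inr.mpr hxc) (mycielskian_adj_inr_inl.mpr hcy)

lemma ncard_twinsIn_le [Finite V] (hS : IsGPSet (Mycielskian G) S) {w : V}
    (hw : w ∈ originalsIn S) : (twinsIn S).ncard ≤ 1 + {u | ¬ G.Adj w u}.ncard := by
  have hsub : twinsIn S ⊆ (twinsIn S ∩ G.neighborSet w) ∪ {u | ¬ G.Adj w u} := fun u hu => by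
    by_cases hwu : G.Adj w u
    · exact .inl ⟨hu, hwu⟩
    · exact .inr hwu
  calc (twinsIn S).ncard
      ≤ (twinsIn S ∩ G.neighborSet w).ncard + {u | ¬ G.Adj w u}.ncard :=
        (Set.ncard_le_ncard hsub).trans (Set.ncard_union_le _ _)
    _ ≤ 1 + {u | ¬ G.Adj w u}.ncard := by
        gcongr
        exact Set.ncard_le_one_iff_subsingleton.mpr
          (twinsIn_inter_neighborSet_subsingleton hS hw)

end MycielskianGP

section CompleteMinusEdge

variable {a b : V}

lemma top_deleteEdges_adj_of_ne {c u : V} (hca : c ≠ a) (hcb : c ≠ b) (hcu : c ≠ u) :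
    ((⊤ : SimpleGraph V).deleteEdges {s(a, b)}).Adj c u := by
  simp [hcu, hca, hcb]

lemma top_deleteEdges_not_adj : ¬ ((⊤ : SimpleGraph V).deleteEdges {s(a, b)}).Adj a b := by
  simp

lemma ncard_setOf_not_adj_top_deleteEdges_le [Finite V] (w : V) :
    {u | ¬ ((⊤ : SimpleGraph V).deleteEdges {s(a, b)}).Adj w u}.ncard ≤ 2 := by
  by_cases hw : w = a ∨ w = b
  · have hsub : {u | ¬ ((⊤ : SimpleGraph V).deleteEdges {s(a, b)}).Adj w u} ⊆ {a, b} := by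
      intro u hu
      simp only [Set.mem_ofPred_eq, deleteEdges_adj, top_adj, Set.mem_singleton_iff,
        Sym2.eq_iff] at hu
      simp only [Set.mem_insert_iff, Set.mem_singleton_iff]
      rcases hw with rfl | rfl <;> tauto
    exact (Set.ncard_le_ncard hsub).trans ((Set.ncard_insert_le _ _).trans (by simp))
  · have hsub : {u | ¬ ((⊤ : SimpleGraph V).deleteEdges {s(a, b)}).Adj w u} ⊆ {w} := by
      push Not at hw
      intro u hu
      by_contra hwu
      exact hu (top_deleteEdges_adj_of_ne hw.1 hw.2 (Ne.symm hwu))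
    exact (Set.ncard_le_ncard hsub).trans (by simp)

variable {S : Set (Option (V ⊕ V))}

lemma originalsIn_union_twinsIn_subset_pair
    (hS : IsGPSet (Mycielskian ((⊤ : SimpleGraph V).deleteEdges {s(a, b)})) S) (hab : a ≠ b)
    (ha : a ∈ originalsIn S) (hb : b ∈ originalsIn S) :
    originalsIn S ∪ twinsIn S ⊆ {a, b} := by
  intro c hc
  by_contra hcab
  simp only [Set.mem_insert_iff, Set.mem_singleton_iff, not_or] at hcab
  exact top_deleteEdges_not_adj <| adj_of_mem_originalsIn_of_adj_of_adj hS ha hb hc hab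
    (top_deleteEdges_adj_of_ne hcab.1 hcab.2 hcab.1).symm
    (top_deleteEdges_adj_of_ne hcab.1 hcab.2 hcab.2)

lemma originalsIn_subsingleton_of_twinsIn_nontrivial
    (hS : IsGPSet (Mycielskian ((⊤ : SimpleGraph V).deleteEdges {s(a, b)})) S)
    (hB : (twinsIn S).Nontrivial)
    (hA : ¬ (a ∈ originalsIn S ∧ b ∈ originalsIn S)) : (originalsIn S).Subsingleton := by
  -- `c ∉ {a, b}` is adjacent to every other vertex, which forces `c ∈ twinsIn S`; then no
  -- other original vertex can sit between `inl c` and `inr c`.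
  have hsingleton :
      ∀ c ∈ originalsIn S, c ≠ a → c ≠ b → ∀ x ∈ originalsIn S, x = c := by
    intro c hc hca hcb x hx
    by_contra hxc
    have hcB : c ∈ twinsIn S := by
      by_contra hcB
      obtain ⟨u, hu, v, hv, huv⟩ := hB
      exact huv <| twinsIn_inter_neighborSet_subsingleton hS hc
        ⟨hu, top_deleteEdges_adj_of_ne hca hcb (by rintro rfl; exact hcB hu)⟩
        ⟨hv, top_deleteEdges_adj_of_ne hca hcb (by rintro rfl; exact hcB hv)⟩
    exact not_adj_of_mem_originalsIn_of_mem_twinsIn hS hc hcB hx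
      (top_deleteEdges_adj_of_ne hca hcb (Ne.symm hxc))
  intro x hx y hy
  by_cases hxab : x = a ∨ x = b
  · by_cases hyab : y = a ∨ y = b
    · by_contra hxy
      apply hA
      rcases hxab with rfl | rfl <;> rcases hyab with rfl | rfl <;> simp_all
    · push Not at hyab
      exact hsingleton y hy hyab.1 hyab.2 x hx
  · push Not at hxab
    exact (hsingleton x hx hxab.1 hxab.2 y hy).symm

lemma ncard_le_four_of_mem_originalsIn [Fintype V]
    (hS : IsGPSet (Mycielskian ((⊤ : SimpleGraph V).deleteEdges {s(a, b)})) S) (hab : a ≠ b)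
    (ha : a ∈ originalsIn S) (hb : b ∈ originalsIn S) : S.ncard ≤ 4 := by
  classical
  have hsub := originalsIn_union_twinsIn_subset_pair hS hab ha hb
  have hA : (originalsIn S).ncard ≤ 2 :=
    (Set.ncard_le_ncard (Set.subset_union_left.trans hsub)).trans (Set.ncard_pair hab).le
  have hB : (twinsIn S).ncard ≤ 2 :=
    (Set.ncard_le_ncard (Set.subset_union_right.trans hsub)).trans (Set.ncard_pair hab).le
  rw [ncard_eq_originalsIn_add_twinsIn]
  split_ifs with hroot
  · have := Set.ncard_le_one_iff_subsingleton.mpr (twinsIn_subsingleton_of_none_mem hS hroot)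
    omega
  · omega

lemma ncard_le_card_of_isGPSet [Fintype V] (hn : 4 ≤ Fintype.card V) (hab : a ≠ b)
    (hS : IsGPSet (Mycielskian ((⊤ : SimpleGraph V).deleteEdges {s(a, b)})) S) :
    S.ncard ≤ Fintype.card V := by
  classical
  by_cases hab_mem : a ∈ originalsIn S ∧ b ∈ originalsIn S
  · exact (ncard_le_four_of_mem_originalsIn hS hab hab_mem.1 hab_mem.2).trans hn
  have hA : (originalsIn S).ncard < Fintype.card V := by
    rw [← Nat.card_eq_fintype_card]
    exact Set.ncard_lt_card fun h => hab_mem ⟨h ▸ trivial, h ▸ trivial⟩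
  have hB : (twinsIn S).ncard ≤ Fintype.card V :=
    (Set.ncard_le_card _).trans_eq Nat.card_eq_fintype_card
  rw [ncard_eq_originalsIn_add_twinsIn]
  split_ifs with hroot
  · rcases (twinsIn S).eq_empty_or_nonempty with hB0 | ⟨w, hw⟩
    · rw [hB0, Set.ncard_empty]
      omega
    have hA2 : (originalsIn S).ncard ≤ 2 :=
      (Set.ncard_le_ncard (originalsIn_subset_of_none_mem hS hroot hw)).trans
        (ncard_setOf_not_adj_top_deleteEdges_le w)
    have hB1 :=
      Set.ncard_le_one_iff_subsingleton.mpr (twinsIn_subsingleton_of_none_mem hS hroot)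
    omega
  · rcases (twinsIn S).subsingleton_or_nontrivial with hB1 | hBnt
    · have := Set.ncard_le_one_iff_subsingleton.mpr hB1
      omega
    rcases (originalsIn S).eq_empty_or_nonempty with hA0 | ⟨w, hw⟩
    · rw [hA0, Set.ncard_empty]
      omega
    have hA1 := Set.ncard_le_one_iff_subsingleton.mpr
      (originalsIn_subsingleton_of_twinsIn_nontrivial hS hBnt hab_mem)
    have hB3 := ncard_twinsIn_le hS hw
    have hN2 := ncard_setOf_not_adj_top_deleteEdges_le (a := a) (b := b) w
    omega

end CompleteMinusEdge

/-- For `n ≥ 4`, the Mycielskian of `K_n` minus an edge has general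
position number `n`. -/
theorem gpNumber_mycielskian_complete_minus_edge [Fintype V]
    (hn : 4 ≤ Fintype.card V) (a b : V) (hab : a ≠ b) :
    gpNumber (Mycielskian ((⊤ : SimpleGraph V).deleteEdges {s(a, b)})) =
      Fintype.card V := by
  have hcard : (Set.range fun v => (some (.inr v) : Option (V ⊕ V))).ncard = Fintype.card V := by
    rw [Set.ncard_range_of_injective (fun u v h => by simpa using h), Nat.card_eq_fintype_card]
  rw [← hcard]
  exact gpNumber_eq_ncard_of_forall_ncard_le (isGPSet_range_twin _) fun T hT =>
    hcard ▸ ncard_le_card_of_isGPSet hn hab hT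
end

section
/- If G is a d-regular finite simple graph of order n with d ≥ 1, then gp(μ(G)) ≤ n + (d − 1)/2 + 1/d (as an inequality of rational numbers; equivalently, 2d·gp(μ(G)) ≤ 2dn + d(d−1) + 2). -/
open SimpleGraph

variable {V : Type*}

/-- `G` is a `d`-regular graph: every vertex has degree `d`. -/
def IsRegularDeg (G : SimpleGraph V) (d : ℕ) : Prop :=
  ∀ v : V, (G.neighborSet v).ncard = d

/-!
Let `S` be a general position set of `μ(G)`, `A` the vertices `u` with `u ∈ S` and `B` those
with `u′ ∈ S`. If the root lies in `S`, the path `u′ — u* — v′` shows that `B` has at most one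
element `v`, and the path `u — v′ — u*` removes every neighbour `u` of `v` from `A`; hence
`|S| ≤ n + 1`. Otherwise `|S| = |A| + |B|`. A vertex of `A ∩ B` has no neighbour in `A` and at
most one in `B`; counting the `d·|A ∩ B|` edges leaving `A ∩ B` gives
`d (|A| + |B|) ≤ d n + |P|`, where `P` is the set of edges between `A ∩ B` and `B`. These edges
form a matching, and for `(v₀, b₀) ∈ P` the path `v₀ — b₀′ — u* — z′` forces every other
endpoint `z` of `P` to share a neighbour with `v₀`, so `2 (|P| - 1) ≤ d (d - 1)`.
-/

open Finset Sum

namespace IsGPSet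

variable {α : Type*} {H : SimpleGraph α} {S : Set α} {x y m m' : α}

lemma notMem_of_mem_support (hS : IsGPSet H S) (hx : x ∈ S) (hy : y ∈ S) (p : H.Walk x y)
    (hp : (p.length : ℕ∞) ≤ H.edist x y) (hm : m ∈ p.support) (hmx : m ≠ x) (hmy : m ≠ y) :
    m ∉ S := by
  have hdist : p.length = H.dist x y := by
    rw [SimpleGraph.dist, le_antisymm p.edist_le hp, ENat.toNat_natCast]
  intro hmS
  rcases hS x hx y hy p hdist m hmS hm with h | h
  exacts [hmx h, hmy h]

lemma notMem_of_adj_of_adj (hS : IsGPSet H S) (hx : x ∈ S) (hy : y ∈ S) (hxy : x ≠ y)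
    (hnadj : ¬ H.Adj x y) (hxm : H.Adj x m) (hmy : H.Adj m y) : m ∉ S := by
  have hdist : H.edist x y = 2 :=
    H.edist_eq_two_iff.mpr ⟨hxy, hnadj, m, (H.mem_commonNeighbors).mpr ⟨hxm, hmy.symm⟩⟩
  exact hS.notMem_of_mem_support hx hy (.cons hxm (.cons hmy .nil)) (by simp [hdist])
    (by simp) hxm.ne' hmy.ne

lemma notMem_of_adj_of_adj_of_adj (hS : IsGPSet H S) (hx : x ∈ S) (hy : y ∈ S) (hxy : x ≠ y)
    (hnadj : ¬ H.Adj x y) (hcommon : H.commonNeighbors x y = ∅)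
    (hxm : H.Adj x m) (hmm' : H.Adj m m') (hm'y : H.Adj m' y) : m ∉ S := by
  have hdist : 3 ≤ H.edist x y :=
    Order.add_one_le_of_lt (H.two_lt_edist_iff.mpr ⟨hxy, hnadj, hcommon⟩)
  refine hS.notMem_of_mem_support hx hy (.cons hxm (.cons hmm' (.cons hm'y .nil)))
    (by simpa using hdist) (by simp) hxm.ne' ?_
  rintro rfl
  exact hnadj hxm

end IsGPSet

namespace Mycielskian

variable {G : SimpleGraph V} {u v : V}

@[simp] lemma adj_inl_inl : (Mycielskian G).Adj (some (inl u)) (some (inl v)) ↔ G.Adj u v := by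
  simpa [Mycielskian, G.adj_comm v u] using fun h : G.Adj u v => h.ne
@[simp] lemma adj_inl_inr : (Mycielskian G).Adj (some (inl u)) (some (inr v)) ↔ G.Adj u v := by
  simp [Mycielskian]
@[simp] lemma adj_inr_inl : (Mycielskian G).Adj (some (inr u)) (some (inl v)) ↔ G.Adj u v := by
  simp [Mycielskian, G.adj_comm]
@[simp] lemma not_adj_inr_inr : ¬ (Mycielskian G).Adj (some (inr u)) (some (inr v)) := by
  simp [Mycielskian]
@[simp] lemma adj_inr_none : (Mycielskian G).Adj (some (inr u)) none := by
  simp [Mycielskian]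
@[simp] lemma adj_none_inr : (Mycielskian G).Adj none (some (inr u)) := by
  simp [Mycielskian]
@[simp] lemma not_adj_inl_none : ¬ (Mycielskian G).Adj (some (inl u)) none := by
  simp [Mycielskian]

end Mycielskian

namespace IsGPSet

variable {G : SimpleGraph V} {S : Set (Option (V ⊕ V))} {u v w x b z : V}

lemma mycielskian_inl_notMem_of_adj (hS : IsGPSet (Mycielskian G) S) (hv : some (inl v) ∈ S)
    (hv' : some (inr v) ∈ S) (hvw : G.Adj v w) : some (inl w) ∉ S :=
  hS.notMem_of_adj_of_adj hv hv' (by simp) (by simp) (by simpa using hvw)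
    (by simpa using hvw.symm)

lemma mycielskian_eq_of_adj_of_adj (hS : IsGPSet (Mycielskian G) S) (hx : some (inl x) ∈ S)
    (hu : some (inr u) ∈ S) (hv : some (inr v) ∈ S) (hxu : G.Adj x u) (hxv : G.Adj x v) :
    u = v := by
  by_contra huv
  exact hS.notMem_of_adj_of_adj hu hv (by simpa using huv) (by simp) (by simpa using hxu.symm)
    (by simpa using hxv) hx

lemma mycielskian_adj_of_adj_of_adj (hS : IsGPSet (Mycielskian G) S) (hu : some (inl u) ∈ S)
    (hw : some (inl w) ∈ S) (hb : some (inr b) ∈ S) (hub : G.Adj u b) (hbw : G.Adj b w) :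
    u = w ∨ G.Adj u w := by
  by_contra! h
  exact hS.notMem_of_adj_of_adj hu hw (by simpa using h.1) (by simpa using h.2)
    (by simpa using hub) (by simpa using hbw) hb

lemma mycielskian_none_notMem (hS : IsGPSet (Mycielskian G) S) (hu : some (inr u) ∈ S)
    (hv : some (inr v) ∈ S) (huv : u ≠ v) : none ∉ S :=
  hS.notMem_of_adj_of_adj hu hv (by simpa using huv) (by simp) (by simp) (by simp)

lemma mycielskian_inl_notMem_of_none_mem (hS : IsGPSet (Mycielskian G) S) (hr : none ∈ S)
    (hv : some (inr v) ∈ S) (huv : G.Adj u v) : some (inl u) ∉ S := fun hu =>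
  hS.notMem_of_adj_of_adj hu hr (by simp) (by simp) (by simpa using huv) (by simp) hv

lemma mycielskian_exists_adj_adj (hS : IsGPSet (Mycielskian G) S) (hv : some (inl v) ∈ S)
    (hb : some (inr b) ∈ S) (hvb : G.Adj v b) (hz : some (inr z) ∈ S)
    (hvz : ¬ G.Adj v z) : ∃ x, G.Adj v x ∧ G.Adj x z := by
  by_contra! h
  have hcommon : (Mycielskian G).commonNeighbors (some (inl v)) (some (inr z)) = ∅ := by
    ext (_ | _ | _) <;> simp_all [mem_commonNeighbors, G.adj_comm z]
  exact hS.notMem_of_adj_of_adj_of_adj hv hz (by simp) (by simpa using hvz) hcommon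
    (by simpa using hvb) Mycielskian.adj_inr_none Mycielskian.adj_none_inr hb

end IsGPSet

lemma two_mul_card_le_card_add_two_of_injOn {α : Type*} [DecidableEq α] {P : Finset (α × α)}
    {D : Finset α} {p₀ : α × α} (hp₀ : p₀ ∈ P) (hfst : Set.InjOn Prod.fst (P : Set (α × α)))
    (hsnd : Set.InjOn Prod.snd (P : Set (α × α))) (hdisj : ∀ p ∈ P, ∀ q ∈ P, p.1 ≠ q.2)
    (hD : ∀ p ∈ P, p ≠ p₀ → p.1 ∈ D ∧ p.2 ∈ D) :
    2 * #P ≤ #D + 2 := by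
  set P' := P.erase p₀
  have hdisj' : Disjoint (P'.image Prod.fst) (P'.image Prod.snd) := by
    simp only [Finset.disjoint_left, mem_image, not_exists, not_and]
    rintro _ ⟨p, hp, rfl⟩ q hq
    exact (hdisj p (mem_of_mem_erase hp) q (mem_of_mem_erase hq)).symm
  have hcard := card_le_card (union_subset
    (image_subset_iff.mpr fun p hp => (hD p (mem_of_mem_erase hp) (ne_of_mem_erase hp)).1)
    (image_subset_iff.mpr fun p hp => (hD p (mem_of_mem_erase hp) (ne_of_mem_erase hp)).2))
  rw [card_union_of_disjoint hdisj', card_image_of_injOn (hfst.mono (by simp [P'])),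
    card_image_of_injOn (hsnd.mono (by simp [P'])), card_erase_of_mem hp₀] at hcard
  omega

section Counting

variable [Fintype V] [DecidableEq V] {G : SimpleGraph V} [DecidableRel G.Adj] {d : ℕ}

lemma SimpleGraph.IsRegularOfDegree.card_filter_exists_adj_adj_le (hreg : G.IsRegularOfDegree d)
    (v : V) :
    #{z | z ≠ v ∧ ∃ x, G.Adj v x ∧ G.Adj x z} ≤ d * (d - 1) := by
  have hsub : ({z | z ≠ v ∧ ∃ x, G.Adj v x ∧ G.Adj x z} : Finset V) ⊆
      (G.neighborFinset v).biUnion fun x => (G.neighborFinset x).erase v := by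
    intro z hz
    obtain ⟨hzv, x, hvx, hxz⟩ := (mem_filter.mp hz).2
    exact mem_biUnion.mpr ⟨x, by simpa using hvx, by simpa [hzv] using hxz⟩
  calc _ ≤ _ := card_le_card hsub
    _ ≤ ∑ x ∈ G.neighborFinset v, #((G.neighborFinset x).erase v) := card_biUnion_le
    _ = ∑ x ∈ G.neighborFinset v, (d - 1) := sum_congr rfl fun x hx => by
      rw [card_erase_of_mem (by simpa [G.adj_comm] using hx), card_neighborFinset_eq_degree,
        hreg.degree_eq]
    _ = d * (d - 1) := by
      rw [sum_const, card_neighborFinset_eq_degree, hreg.degree_eq, smul_eq_mul]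

lemma SimpleGraph.IsRegularOfDegree.mul_card_le_mul_card_add_card_filter_adj
    (hreg : G.IsRegularOfDegree d) {C W B : Finset V}
    (hC : ∀ v ∈ C, ∀ w, G.Adj v w → w ∈ W ∨ w ∈ B) :
    d * #C ≤ d * #W + #{p ∈ C ×ˢ B | G.Adj p.1 p.2} := by
  have hdeg : ∀ v ∈ C, d ≤ #(W.bipartiteAbove G.Adj v) + #(B.bipartiteAbove G.Adj v) := by
    intro v hv
    rw [← hreg.degree_eq v, ← card_neighborFinset_eq_degree]
    refine (card_le_card fun w hw => ?_).trans (card_union_le _ _)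
    have hvw : G.Adj v w := by simpa using hw
    simpa [hvw] using hC v hv w hvw
  have hW : ∑ v ∈ C, #(W.bipartiteAbove G.Adj v) ≤ d * #W := by
    rw [sum_card_bipartiteAbove_eq_sum_card_bipartiteBelow, mul_comm, ← smul_eq_mul,
      ← sum_const]
    refine sum_le_sum fun w _ => ?_
    rw [← hreg.degree_eq w, ← card_neighborFinset_eq_degree]
    exact card_le_card fun v hv => by simpa [G.adj_comm] using ((mem_bipartiteBelow _).mp hv).2
  have hB : ∑ v ∈ C, #(B.bipartiteAbove G.Adj v) = #{p ∈ C ×ˢ B | G.Adj p.1 p.2} := by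
    simp only [bipartiteAbove, card_filter, sum_product]
  calc d * #C = ∑ v ∈ C, d := by rw [sum_const, smul_eq_mul, mul_comm]
    _ ≤ ∑ v ∈ C, (#(W.bipartiteAbove G.Adj v) + #(B.bipartiteAbove G.Adj v)) :=
      sum_le_sum hdeg
    _ ≤ d * #W + #{p ∈ C ×ˢ B | G.Adj p.1 p.2} := by rw [sum_add_distrib, hB]; gcongr

/- In the application `A` and `B` are the vertices of a general position set `S` of `μ(G)` and
of its twins; the four hypotheses exclude the shortest paths `v — w — v′`, `u′ — x — v′`,
`u — b′ — w` and `v — b′ — u* — z′` with their middle vertex in `S`. -/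
lemma SimpleGraph.IsRegularOfDegree.two_mul_card_filter_adj_le (hreg : G.IsRegularOfDegree d)
    {A B : Finset V}
    (hnbr : ∀ v ∈ A, v ∈ B → ∀ w, G.Adj v w → w ∉ A)
    (huniq : ∀ x ∈ A, ∀ u ∈ B, ∀ v ∈ B, G.Adj x u → G.Adj x v → u = v)
    (hcommon : ∀ u ∈ A, ∀ w ∈ A, ∀ b ∈ B, G.Adj u b → G.Adj b w → u = w ∨ G.Adj u w)
    (hpath : ∀ v ∈ A, ∀ b ∈ B, G.Adj v b → ∀ z ∈ B, ¬ G.Adj v z →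
      ∃ x, G.Adj v x ∧ G.Adj x z) :
    2 * #{p ∈ (A ∩ B) ×ˢ B | G.Adj p.1 p.2} ≤ d * (d - 1) + 2 := by
  set P := {p ∈ (A ∩ B) ×ˢ B | G.Adj p.1 p.2}
  have hP {v b : V} : (v, b) ∈ P ↔ (v ∈ A ∧ v ∈ B) ∧ b ∈ B ∧ G.Adj v b := by
    simp [P, and_assoc]
  have hfst : Set.InjOn Prod.fst (P : Set (V × V)) := by
    rintro ⟨v, b⟩ hp ⟨v', b'⟩ hp' (rfl : v = v')
    obtain ⟨⟨hvA, -⟩, hb, hvb⟩ := hP.mp hp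
    obtain ⟨-, hb', hvb'⟩ := hP.mp hp'
    rw [huniq v hvA b hb b' hb' hvb hvb']
  have hsnd : Set.InjOn Prod.snd (P : Set (V × V)) := by
    rintro ⟨v, b⟩ hp ⟨v', b'⟩ hp' (rfl : b = b')
    obtain ⟨⟨hvA, hvB⟩, hb, hvb⟩ := hP.mp hp
    obtain ⟨⟨hv'A, -⟩, -, hv'b⟩ := hP.mp hp'
    rcases hcommon v hvA v' hv'A b hb hvb hv'b.symm with rfl | hvv'
    · rfl
    · exact absurd hv'A (hnbr v hvA hvB v' hvv')
  have hdisj : ∀ p ∈ P, ∀ q ∈ P, p.1 ≠ q.2 := by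
    rintro ⟨v, b⟩ hp ⟨v', b'⟩ hq (rfl : v = b')
    obtain ⟨⟨hvA, -⟩, -⟩ := hP.mp hp
    obtain ⟨⟨hv'A, hv'B⟩, -, hv'v⟩ := hP.mp hq
    exact hnbr v' hv'A hv'B v hv'v hvA
  obtain hPe | ⟨⟨v₀, b₀⟩, hp₀⟩ := P.eq_empty_or_nonempty
  · simp [hPe]
  obtain ⟨⟨hv₀A, hv₀B⟩, hb₀, hv₀b₀⟩ := hP.mp hp₀
  set D : Finset V := {z | z ≠ v₀ ∧ ∃ x, G.Adj v₀ x ∧ G.Adj x z}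
  have hD : ∀ p ∈ P, p ≠ (v₀, b₀) → p.1 ∈ D ∧ p.2 ∈ D := by
    rintro ⟨v, b⟩ hp hne
    obtain ⟨⟨hvA, hvB⟩, hb, hvb⟩ := hP.mp hp
    have hv₀b : ¬ G.Adj v₀ b := fun h =>
      hne (hsnd hp hp₀ (huniq v₀ hv₀A b hb b₀ hb₀ h hv₀b₀))
    refine ⟨mem_filter.mpr ⟨mem_univ _, fun h => hne (hfst hp hp₀ h), ?_⟩,
      mem_filter.mpr ⟨mem_univ _, fun h => hdisj _ hp₀ _ hp h.symm, ?_⟩⟩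
    · exact hpath v₀ hv₀A b₀ hb₀ hv₀b₀ v hvB fun h => hnbr v₀ hv₀A hv₀B v h hvA
    · exact hpath v₀ hv₀A b₀ hb₀ hv₀b₀ b hb hv₀b
  have : #D ≤ d * (d - 1) := hreg.card_filter_exists_adj_adj_le v₀
  have := two_mul_card_le_card_add_two_of_injOn hp₀ hfst hsnd hdisj hD
  omega

theorem SimpleGraph.IsRegularOfDegree.two_mul_mul_card_add_card_le
    (hreg : G.IsRegularOfDegree d) {A B : Finset V}
    (hnbr : ∀ v ∈ A, v ∈ B → ∀ w, G.Adj v w → w ∉ A)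
    (huniq : ∀ x ∈ A, ∀ u ∈ B, ∀ v ∈ B, G.Adj x u → G.Adj x v → u = v)
    (hcommon : ∀ u ∈ A, ∀ w ∈ A, ∀ b ∈ B, G.Adj u b → G.Adj b w → u = w ∨ G.Adj u w)
    (hpath : ∀ v ∈ A, ∀ b ∈ B, G.Adj v b → ∀ z ∈ B, ¬ G.Adj v z →
      ∃ x, G.Adj v x ∧ G.Adj x z) :
    2 * d * (#A + #B) ≤ 2 * d * Fintype.card V + d * (d - 1) + 2 := by
  set U : Finset V := {w | w ∉ B ∧ ∃ v ∈ A ∩ B, G.Adj v w}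
  have hedge := hreg.mul_card_le_mul_card_add_card_filter_adj (C := A ∩ B) (W := U) (B := B)
    fun v hv w hvw => by
      by_cases hw : w ∈ B
      · exact .inr hw
      · exact .inl (mem_filter.mpr ⟨mem_univ _, hw, v, hv, hvw⟩)
  have hpairs := hreg.two_mul_card_filter_adj_le hnbr huniq hcommon hpath
  have hAU : Disjoint A U := Finset.disjoint_left.mpr fun w hwA hwU => by
    obtain ⟨-, -, v, hv, hvw⟩ := mem_filter.mp hwU
    exact hnbr v (mem_inter.mp hv).1 (mem_inter.mp hv).2 w hvw hwA
  have hUB : Disjoint (A ∪ U) (B \ A) := Finset.disjoint_left.mpr fun w hw hwB => by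
    obtain ⟨hwB, hwA⟩ := mem_sdiff.mp hwB
    rcases mem_union.mp hw with hwA' | hwU
    exacts [hwA hwA', (mem_filter.mp hwU).2.1 hwB]
  have hpart : #A + #U + #(B \ A) ≤ Fintype.card V := by
    rw [← card_union_of_disjoint hAU, ← card_union_of_disjoint hUB]
    exact card_le_univ _
  have hB : #(A ∩ B) + #(B \ A) = #B := by rw [inter_comm, card_inter_add_card_sdiff]
  nlinarith

end Counting

lemma ncard_option_sum_le [Finite V] (S : Set (Option (V ⊕ V))) :
    S.ncard ≤
      {v | some (inl v) ∈ S}.ncard + {v | some (inr v) ∈ S}.ncard + (S ∩ {none}).ncard := by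
  have hS : S ⊆ (some ∘ inl) '' {v | some (inl v) ∈ S} ∪
      (some ∘ inr) '' {v | some (inr v) ∈ S} ∪ (S ∩ {none}) := by
    rintro (_ | _ | _) hx <;> simp [hx]
  calc S.ncard ≤ _ := Set.ncard_le_ncard hS (Set.toFinite _)
    _ ≤ _ := (Set.ncard_union_le _ _).trans (add_le_add_left (Set.ncard_union_le _ _) _)
    _ = _ := by
      rw [Set.ncard_image_of_injective _ ((Option.some_injective _).comp inl_injective),
        Set.ncard_image_of_injective _ ((Option.some_injective _).comp inr_injective)]

lemma IsRegularDeg.isRegularOfDegree [Fintype V] {G : SimpleGraph V} [DecidableRel G.Adj]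
    {d : ℕ} (hreg : IsRegularDeg G d) : G.IsRegularOfDegree d := fun v => by
  rw [← card_neighborFinset_eq_degree, neighborFinset_def, ← Set.ncard_eq_toFinset_card', hreg v]

lemma exists_isGpSet [Fintype V] (G : SimpleGraph V) : ∃ S, IsGpSet G S := by
  have hne : {k | ∃ S : Set V, IsGPSet G S ∧ S.ncard = k}.Nonempty :=
    ⟨0, ∅, fun _ h => absurd h (Set.notMem_empty _), Set.ncard_empty V⟩
  have hbdd : BddAbove {k | ∃ S : Set V, IsGPSet G S ∧ S.ncard = k} :=
    ⟨Nat.card V, by rintro _ ⟨S, -, rfl⟩; exact Set.ncard_le_card S⟩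
  exact Nat.sSup_mem hne hbdd

namespace IsGPSet

variable [Fintype V] {G : SimpleGraph V} {S : Set (Option (V ⊕ V))}

lemma mycielskian_card_add_card_le_of_none_mem (hS : IsGPSet (Mycielskian G) S)
    (hG : ∀ v, ∃ u, G.Adj u v) (hr : none ∈ S) {A B : Finset V}
    (hA : ∀ v ∈ A, some (inl v) ∈ S) (hB : ∀ v ∈ B, some (inr v) ∈ S) :
    #A + #B ≤ Fintype.card V := by
  rcases B.eq_empty_or_nonempty with rfl | ⟨v, hv⟩
  · simpa using card_le_univ A
  have hB1 : #B ≤ 1 := card_le_one.mpr fun u hu w hw => by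
    by_contra huw
    exact hS.mycielskian_none_notMem (hB u hu) (hB w hw) huw hr
  obtain ⟨u, huv⟩ := hG v
  have huA : u ∉ A := fun hu => hS.mycielskian_inl_notMem_of_none_mem hr (hB v hv) huv (hA u hu)
  have := card_lt_univ_of_notMem huA
  omega

theorem mycielskian_two_mul_mul_ncard_le [DecidableRel G.Adj] {d : ℕ}
    (hS : IsGPSet (Mycielskian G) S) (hd : 1 ≤ d) (hreg : G.IsRegularOfDegree d) :
    2 * d * S.ncard ≤ 2 * d * Fintype.card V + d * (d - 1) + 2 := by
  classical
  set A : Finset V := {v | some (inl v) ∈ S}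
  set B : Finset V := {v | some (inr v) ∈ S}
  have hA {v : V} : v ∈ A ↔ some (inl v) ∈ S := by simp [A]
  have hB {v : V} : v ∈ B ↔ some (inr v) ∈ S := by simp [B]
  have hcount : S.ncard ≤ #A + #B + (S ∩ {none}).ncard := by
    simpa [A, B, ← Set.ncard_coe_finset] using ncard_option_sum_le S
  by_cases hr : none ∈ S
  · have hG (v : V) : ∃ u, G.Adj u v := by
      obtain ⟨u, hvu⟩ := (G.degree_pos_iff_exists_adj v).mp (hreg.degree_eq v ▸ hd)
      exact ⟨u, hvu.symm⟩
    have hAB :=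
      hS.mycielskian_card_add_card_le_of_none_mem hG hr (fun _ => hA.mp) (fun _ => hB.mp)
    have hnone : (S ∩ {none}).ncard ≤ 1 :=
      (Set.ncard_le_ncard Set.inter_subset_right).trans (Set.ncard_singleton _).le
    have h2d : 2 * d ≤ d * (d - 1) + 2 := by
      rcases d with _ | d
      · simp
      · simp only [add_tsub_cancel_right]; nlinarith [Nat.le_mul_self d]
    nlinarith
  · have hnone : (S ∩ {none}).ncard = 0 := by simp [Set.inter_singleton_eq_empty.mpr hr]
    have := hreg.two_mul_mul_card_add_card_le (A := A) (B := B)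
      (fun v hv hv' w hvw hw =>
        hS.mycielskian_inl_notMem_of_adj (hA.mp hv) (hB.mp hv') hvw (hA.mp hw))
      (fun x hx u hu v hv => hS.mycielskian_eq_of_adj_of_adj (hA.mp hx) (hB.mp hu) (hB.mp hv))
      (fun u hu w hw b hb => hS.mycielskian_adj_of_adj_of_adj (hA.mp hu) (hA.mp hw) (hB.mp hb))
      (fun v hv b hb hvb z hz =>
        hS.mycielskian_exists_adj_adj (hA.mp hv) (hB.mp hb) hvb (hB.mp hz))
    nlinarith

end IsGPSet

/-- For a `d`-regular graph `G` of order `n` with `d ≥ 1`,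
`gp(μ(G)) ≤ n + (d-1)/2 + 1/d`, equivalently `2d·gp(μ(G)) ≤ 2dn + d(d-1) + 2`. -/
theorem gpNumber_mycielskian_regular_bound [Fintype V] (G : SimpleGraph V)
    {d : ℕ} (hd : 1 ≤ d) (hreg : IsRegularDeg G d) :
    2 * d * gpNumber (Mycielskian G) ≤
      2 * d * Fintype.card V + d * (d - 1) + 2 := by
  classical
  obtain ⟨S, hS, hcard⟩ := exists_isGpSet (Mycielskian G)
  rw [← hcard]
  exact hS.mycielskian_two_mul_mul_ncard_le hd hreg.isRegularOfDegree
end
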